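/- arXiv:math/0310296 — 7 statements merged into one kernel-verified Lean document; each statement's English description precedes it below -/
import Mathlib

section
/- Let G be an infinite, finitely generated group, and let f = \sum_g a_g g be a formal sum with complex coefficients such that \sum_g |a_g|^p < \infty for some natural number p. If for every g in a finite generating set S of G (closed under inverses) the set {x \in G : a_x \neq a_{gx}} is finite, then a_x = 0 for all but finitely many x (i.e. f has finite support). -/
/-!
Outside the finite set `F` of points `x` with `a x ≠ a (s * x)` for some `s ∈ S`, the
function `a` is invariant under the generators. Since `a` is `ℓᵖ`, each level set
`{x | a x = c}` with `c ≠ 0` is finite; a finite nonempty set cannot be closed under left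
multiplication by a generating set of an infinite group, so every such level set has a point
of `F`. Hence `a` takes only finitely many nonzero values, each on a finite set.
-/

open Pointwise

theorem Set.finite_setOf_eq_of_summable_norm_rpow {ι E : Type*} [NormedAddCommGroup E]
    {f : ι → E} {r : ℝ} (hf : Summable fun i => ‖f i‖ ^ r) {c : E} (hc : c ≠ 0) :
    {i | f i = c}.Finite := by
  have hpos : 0 < ‖c‖ ^ r := Real.rpow_pos_of_pos (norm_pos_iff.mpr hc) r
  have hsmall : ∀ᶠ i in Filter.cofinite, ‖f i‖ ^ r < ‖c‖ ^ r :=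
    hf.tendsto_cofinite_zero.eventually (gt_mem_nhds hpos)
  refine (Filter.eventually_cofinite.mp hsmall).subset fun i (hi : f i = c) => ?_
  simp [hi]

/-- A finite set stable under each `s ∈ S` is fixed by `s`, as left multiplication is
injective; so its stabilizer contains `S`, hence all of `G`. -/
theorem Set.eq_univ_of_finite_of_forall_mul_mem {G : Type*} [Group G] {S : Set G}
    (hS : Subgroup.closure S = ⊤) {L : Set G} (hL : L.Finite) (hne : L.Nonempty)
    (hmul : ∀ s ∈ S, ∀ x ∈ L, s * x ∈ L) : L = Set.univ := by
  have hstab : Subgroup.closure S ≤ MulAction.stabilizer G L := by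
    refine (Subgroup.closure_le _).mpr fun s hs => MulAction.mem_stabilizer_iff.mpr ?_
    exact Set.eq_of_subset_of_ncard_le (Set.smul_set_subset_iff.mpr (hmul s hs))
      (Set.ncard_smul_set s L).ge hL
  obtain ⟨x, hx⟩ := hne
  refine Set.eq_univ_of_forall fun y => ?_
  have hyx : (y * x⁻¹) • L = L :=
    MulAction.mem_stabilizer_iff.mp (hstab (hS ▸ Subgroup.mem_top _))
  simpa [hyx] using Set.smul_mem_smul_set (a := y * x⁻¹) hx

theorem stmt0_general {G : Type*} [Group G] [Infinite G]
    (S : Finset G) (hgen : Subgroup.closure (S : Set G) = ⊤)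
    (p : ℕ)
    (a : G → ℂ) (hsum : Summable fun x => ‖a x‖ ^ (p : ℝ))
    (hfin : ∀ g ∈ S, {x : G | a x ≠ a (g * x)}.Finite) :
    (Function.support a).Finite := by
  set F : Set G := ⋃ s ∈ S, {x : G | a x ≠ a (s * x)}
  have hF : F.Finite := Set.Finite.biUnion S.finite_toSet hfin
  have hlevel : ∀ x ∈ Function.support a, ∃ y ∈ F ∩ Function.support a, a x = a y := by
    intro x hx
    have hL : {y | a y = a x}.Finite := Set.finite_setOf_eq_of_summable_norm_rpow hsum hx
    have hne : {y | a y = a x} ≠ Set.univ := fun h => Set.infinite_univ (h ▸ hL)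
    obtain ⟨s, hs, y, hy, hsy⟩ : ∃ s ∈ (S : Set G), ∃ y, a y = a x ∧ a (s * y) ≠ a x := by
      by_contra! hclosed
      exact hne (Set.eq_univ_of_finite_of_forall_mul_mem hgen hL ⟨x, rfl⟩ hclosed)
    refine ⟨y, ⟨Set.mem_biUnion hs ?_, ?_⟩, hy.symm⟩
    · exact fun h => hsy (h ▸ hy)
    · rwa [Function.mem_support, hy]
  have hcover : Function.support a ⊆ ⋃ y ∈ F ∩ Function.support a, {x | a x = a y} :=
    fun x hx => by
      obtain ⟨y, hy, hxy⟩ := hlevel x hx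
      exact Set.mem_biUnion hy hxy
  exact ((hF.inter_of_left _).biUnion fun y hy =>
    Set.finite_setOf_eq_of_summable_norm_rpow hsum hy.2).subset hcover

/-- If `G` is an infinite, finitely generated group with finite symmetric generating set `S`,
and `a : G → ℂ` has `∑ |a x|^p < ∞` for some `p ≥ 1`, and for every `g ∈ S` the set
`{x | a x ≠ a (g * x)}` is finite, then `a` has finite support. -/
theorem stmt0 {G : Type*} [Group G] [Infinite G]
    (S : Finset G) (hgen : Subgroup.closure (S : Set G) = ⊤)
    (hsymm : ∀ s ∈ S, s⁻¹ ∈ S)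
    (p : ℕ) (hp : 1 ≤ p)
    (a : G → ℂ) (hsum : Summable fun x => ‖a x‖ ^ (p : ℝ))
    (hfin : ∀ g ∈ S, {x : G | a x ≠ a (g * x)}.Finite) :
    (Function.support a).Finite :=
  stmt0_general S hgen p a hsum hfin
end

section
/- Let G be an infinite, finitely generated group and M a Banach space that is a left \mathbb{C}G-module on which each element of G acts as a continuous linear transformation, with \mathbb{C}G \subseteq M \subseteq L^p(G) for some natural number p. Then the G-module inclusion of \mathbb{C}G into M induces an injective homomorphism from H^1(G, \mathbb{C}G) into H^1(G, M). -/
/-!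
Write `u : G → ℂ` for the `Lᵖ`-function of an `f ∈ M` whose coboundary is the `ℂG`-valued
cocycle `b`. The coefficients of `b g` are `u (g⁻¹ x) - u x`, so `u` is almost invariant: each
translate of `u` differs from `u` at finitely many points only. Let `F` be the finite set where `u`
fails to be invariant under one of finitely many monoid generators. The fibre of `u` through a
point outside `F` is closed under the generators until it meets `F`; since `G` is infinite, a
finite fibre must meet `F`. As `u ∈ Lᵖ`, all fibres over nonzero values are finite, so `u` takes
only the finitely many values `u '' F` on its support, which is therefore finite. Hence `f` lies
in `ℂG` and `b` is already a coboundary there.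
-/

open MonoidAlgebra

section AlmostInvariant

variable {G α : Type*} [Group G]

def AlmostInvariant (u : G → α) : Prop :=
  ∀ g : G, {x | u (g * x) ≠ u x}.Finite

theorem exists_mem_eq_of_finite_fiber [Infinite G] {T F : Set G}
    (hT : Submonoid.closure T = ⊤) {u : G → α} (hu : ∀ x ∉ F, ∀ s ∈ T, u (s * x) = u x)
    {x : G} (hfin : (u ⁻¹' {u x}).Finite) : ∃ y ∈ F, u y = u x := by
  by_contra! hF
  have hclosed : ∀ g : G, ∀ y ∈ u ⁻¹' {u x}, g * y ∈ u ⁻¹' {u x} := by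
    intro g
    have hg : g ∈ Submonoid.closure T := hT ▸ Submonoid.mem_top g
    induction hg using Submonoid.closure_induction with
    | mem s hs =>
      intro y (hy : u y = u x)
      have hyF : y ∉ F := fun h => hF y h hy
      exact (hu y hyF s hs).trans hy
    | one => simp
    | mul g h _ _ ihg ihh =>
      intro y hy
      rw [mul_assoc]
      exact ihg _ (ihh y hy)
  exact Set.infinite_of_injective_forall_mem (mul_left_injective x)
    (fun g => hclosed g x rfl) hfin

theorem AlmostInvariant.finite_support [Infinite G] [Monoid.FG G] [Zero α] {u : G → α}
    (hu : AlmostInvariant u) (hfib : ∀ c ≠ 0, (u ⁻¹' {c}).Finite) :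
    (Function.support u).Finite := by
  obtain ⟨T, hT, hTfin⟩ := Monoid.fg_iff.1 ‹Monoid.FG G›
  set F := ⋃ s ∈ T, {x | u (s * x) ≠ u x}
  have hinv : ∀ x ∉ F, ∀ s ∈ T, u (s * x) = u x := fun x hx s hs =>
    not_not.1 fun h => hx (Set.mem_biUnion hs h)
  have hvalues : (u '' F \ {0}).Finite := ((hTfin.biUnion fun s _ => hu s).image u).sdiff
  refine (hvalues.biUnion fun c hc => hfib c hc.2).subset fun x hx => ?_
  obtain ⟨y, hyF, hy⟩ := exists_mem_eq_of_finite_fiber hT hinv (hfib (u x) hx)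
  exact Set.mem_biUnion ⟨⟨y, hyF, hy⟩, hx⟩ rfl

end AlmostInvariant

theorem finite_preimage_singleton_of_summable_rpow {X E : Type*} [NormedAddCommGroup E]
    {u : X → E} {p : ℝ} (hu : Summable fun x => ‖u x‖ ^ p) {c : E} (hc : c ≠ 0) :
    (u ⁻¹' {c}).Finite := by
  have hpos : 0 < ‖c‖ ^ p := Real.rpow_pos_of_pos (norm_pos_iff.2 hc) p
  refine (Filter.eventually_cofinite.1
    (hu.tendsto_cofinite_zero.eventually (gt_mem_nhds hpos))).subset ?_
  rintro x rfl
  exact lt_irrefl _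

/-- `ι` is the inclusion `ℂG ⊆ M` and `j` the inclusion `M ⊆ Lᵖ(G)`; injectivity of
`H¹(G, ℂG) → H¹(G, M)` is stated as: a `ℂG`-valued cocycle that is a coboundary in `M` is a
coboundary in `ℂG`. -/
theorem stmt2_general {G : Type*} [Group G] [Infinite G] [Group.FG G]
    {M : Type*} [NormedAddCommGroup M] [NormedSpace ℂ M]
    (ρ : G →* (M →L[ℂ] M))
    (p : ℕ)
    (ι : MonoidAlgebra ℂ G →ₗ[ℂ] M) (hι : Function.Injective ι)
    (j : M →ₗ[ℂ] (G → ℂ)) (hj : Function.Injective j)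
    (hcomp : ∀ (c : MonoidAlgebra ℂ G) (x : G), j (ι c) x = c.coeff x)
    (hmem : ∀ f : M, Summable fun x => ‖j f x‖ ^ (p : ℝ))
    (hequiv : ∀ (g : G) (f : M) (x : G), j (ρ g f) x = j f (g⁻¹ * x)) :
    ∀ b : G → MonoidAlgebra ℂ G,
      (∀ g h : G, of ℂ G g * b h - b (g * h) + b g = 0) →
      (∃ f : M, ∀ g : G, ι (b g) = ρ g f - f) →
      ∃ e : MonoidAlgebra ℂ G, ∀ g : G, b g = of ℂ G g * e - e := by
  rintro b - ⟨f, hf⟩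
  have hcoeff : ∀ g x, (b g).coeff x = j f (g⁻¹ * x) - j f x := fun g x => by
    rw [← hcomp, hf, map_sub, Pi.sub_apply, hequiv]
  have halmost : AlmostInvariant (j f) := fun g =>
    (b g⁻¹).coeff.hasFiniteSupport.subset fun x hx => by
      simpa [hcoeff, sub_eq_zero] using hx
  have hsupp : (Function.support (j f)).Finite :=
    halmost.finite_support fun _ => finite_preimage_singleton_of_summable_rpow (hmem f)
  set e : MonoidAlgebra ℂ G := ofCoeff (Finsupp.ofSupportFinite (j f) hsupp)
  have hιe : ι e = f := hj <| funext fun x => hcomp e x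
  have hιge : ∀ g, ι (of ℂ G g * e) = ρ g f := fun g => hj <| funext fun x => by
    rw [hcomp, hequiv, ← hιe, hcomp]
    simp
  exact ⟨e, fun g => hι (by rw [map_sub, hιge, hιe, hf])⟩

/-- Let `G` be an infinite, finitely generated group and `M` a Banach space that is a left
`ℂG`-module on which each `g ∈ G` acts as a continuous linear map (via `ρ`), with
`ℂG ⊆ M ⊆ Lᵖ(G)`. Here `ι : ℂG → M` is the first inclusion and `j : M → (G → ℂ)` realizes
elements of `M` as `p`-summable formal sums, compatibly with the `G`-actions.
Then the inclusion `ℂG → M` induces an injective homomorphism `H¹(G,ℂG) → H¹(G,M)`: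
a `ℂG`-valued 1-cocycle which becomes a coboundary in `M` is already a coboundary in `ℂG`. -/
theorem stmt2 {G : Type*} [Group G] [Infinite G] [Group.FG G]
    {M : Type*} [NormedAddCommGroup M] [NormedSpace ℂ M] [CompleteSpace M]
    (ρ : G →* (M →L[ℂ] M))
    (p : ℕ) (hp : 1 ≤ p)
    (ι : MonoidAlgebra ℂ G →ₗ[ℂ] M) (hι : Function.Injective ι)
    (j : M →ₗ[ℂ] (G → ℂ)) (hj : Function.Injective j)
    (hcomp : ∀ (c : MonoidAlgebra ℂ G) (x : G), j (ι c) x = c.coeff x)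
    (hmem : ∀ f : M, Summable fun x => ‖j f x‖ ^ (p : ℝ))
    (hequiv : ∀ (g : G) (f : M) (x : G), j (ρ g f) x = j f (g⁻¹ * x)) :
    ∀ b : G → MonoidAlgebra ℂ G,
      (∀ g h : G, of ℂ G g * b h - b (g * h) + b g = 0) →
      (∃ f : M, ∀ g : G, ι (b g) = ρ g f - f) →
      ∃ e : MonoidAlgebra ℂ G, ∀ g : G, b g = of ℂ G g * e - e :=
  stmt2_general ρ p ι hι j hj hcomp hmem hequiv
end

section
/- Let G be an infinite, finitely generated group and M a Banach space and left \mathbb{C}G-module with \mathbb{C}G \subseteq M \subseteq L^p(G) for some natural number p, on which G acts by continuous linear maps. If H^1(G, M) = 0, then G has exactly one end. -/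
/-!
Suppose some finite set `K` of vertices of the Cayley graph had two distinct infinite
complementary components `C` and `D`. Since the edges leaving `C` all end in `K`, the indicator
`φ` of `C` is almost invariant: each `g • φ - φ` is finitely supported, i.e. lies in `ℂG ⊆ M`,
and `g ↦ g • φ - φ` is a cocycle. As `H¹(G, M) = 0` it is a coboundary `g ↦ g • α - α`, so
`φ - α` is `G`-invariant, hence a constant `k`. But `α ∈ ℓᵖ(G)` tends to `0` at infinity, so
`k = 1` along `C` and `k = 0` along `D`.
-/

/-- The Cayley graph of a group `G` with respect to a generating set `S`. -/
def cayleyGraph {G : Type*} [Group G] (S : Finset G) : SimpleGraph G :=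
  SimpleGraph.fromRel (fun x y => ∃ s ∈ S, y = s * x)

open Function

namespace SimpleGraph

variable {V : Type*} (Γ : SimpleGraph V)

-- Mathlib states `end_componentCompl_infinite` and `nonempty_ends_of_infinite` for `V : Type` only.
theorem natCard_end_eq_one_of_infinite_componentCompl_eq [Γ.LocallyFinite] [Fact Γ.Preconnected]
    [Infinite V]
    (h : ∀ (K : Finset V) (C D : Γ.ComponentCompl K), C.supp.Infinite → D.supp.Infinite → C = D) :
    Nat.card Γ.end = 1 := by
  have hinf (e : Γ.end) (K : (Finset V)ᵒᵖ) : (e.val K).supp.Infinite := by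
    refine (e.val K).infinite_iff_in_all_ranges.mpr fun L hKL => ?_
    exact ⟨e.val (.op L), e.prop (CategoryTheory.opHomOfLE hKL)⟩
  have : ∀ K : (Finset V)ᵒᵖ, Finite (Γ.componentComplFunctor.obj K) :=
    fun K => Γ.componentCompl_finite K.unop
  have : ∀ K : (Finset V)ᵒᵖ, Nonempty (Γ.componentComplFunctor.obj K) :=
    fun K => Γ.componentCompl_nonempty_of_infinite K.unop
  obtain ⟨e, he⟩ := nonempty_sections_of_finite_inverse_system Γ.componentComplFunctor
  refine Nat.card_eq_one_iff_exists.mpr ⟨⟨e, he⟩, fun e' => Subtype.ext (funext fun K => ?_)⟩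
  exact h _ _ _ (hinf e' K) (hinf ⟨e, he⟩ K)

end SimpleGraph

section cayleyGraph

variable {G : Type*} [Group G] {S : Finset G}

theorem cayleyGraph_adj_mul_right {x y : G} (a : G) (h : (cayleyGraph S).Adj x y) :
    (cayleyGraph S).Adj (x * a) (y * a) := by
  obtain ⟨hne, h⟩ := h
  refine ⟨by simpa using hne, ?_⟩
  rcases h with ⟨s, hs, rfl⟩ | ⟨s, hs, rfl⟩
  · exact .inl ⟨s, hs, mul_assoc s x a⟩
  · exact .inr ⟨s, hs, mul_assoc s y a⟩

theorem cayleyGraph_adj_inv_mul {s x : G} (hs : s ∈ S) (hne : x ≠ s⁻¹ * x) :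
    (cayleyGraph S).Adj x (s⁻¹ * x) :=
  ⟨hne, .inr ⟨s, hs, by group⟩⟩

def cayleyGraphMulRight (S : Finset G) (a : G) : cayleyGraph S →g cayleyGraph S :=
  ⟨(· * a), cayleyGraph_adj_mul_right a⟩

@[simp]
theorem cayleyGraphMulRight_apply (a x : G) : cayleyGraphMulRight S a x = x * a := rfl

theorem cayleyGraph_reachable_one (hS : Subgroup.closure (S : Set G) = ⊤) (g : G) :
    (cayleyGraph S).Reachable 1 g := by
  have hg : g ∈ Subgroup.closure (S : Set G) := hS ▸ Subgroup.mem_top g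
  induction hg using Subgroup.closure_induction with
  | mem s hs =>
    rcases eq_or_ne s 1 with rfl | hne
    · rfl
    · exact SimpleGraph.Adj.reachable ⟨hne.symm, .inl ⟨s, hs, (mul_one s).symm⟩⟩
  | one => rfl
  | mul x y _ _ hx hy =>
    have hxy := hx.map (cayleyGraphMulRight S y)
    rw [cayleyGraphMulRight_apply, cayleyGraphMulRight_apply, one_mul] at hxy
    exact hy.trans hxy
  | inv x _ hx =>
    simpa using (hx.map (cayleyGraphMulRight S x⁻¹)).symm

theorem cayleyGraph_preconnected (hS : Subgroup.closure (S : Set G) = ⊤) :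
    (cayleyGraph S).Preconnected := fun x y => by
  simpa using (cayleyGraph_reachable_one hS (y * x⁻¹)).map (cayleyGraphMulRight S x)

noncomputable instance cayleyGraph_locallyFinite (S : Finset G) :
    (cayleyGraph S).LocallyFinite := fun v => by
  refine Set.Finite.fintype <|
    ((S.finite_toSet.image (· * v)).union (S.finite_toSet.image (·⁻¹ * v))).subset ?_
  rintro w ⟨-, ⟨s, hs, rfl⟩ | ⟨s, hs, rfl⟩⟩
  · exact .inl ⟨s, hs, rfl⟩
  · exact .inr ⟨s, hs, inv_mul_cancel_left s w⟩

end cayleyGraph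

section almostStabilizer

variable {G R : Type*} [Group G] [AddGroup R]

def almostStabilizer (f : G → R) : Subgroup G where
  carrier := {g | (support fun x => f (g⁻¹ * x) - f x).Finite}
  one_mem' := by simp
  mul_mem' {g h} hg hh := by
    refine ((hh.preimage (mul_right_injective g⁻¹).injOn).union hg).subset fun x hx => ?_
    have hsplit : (fun x => f ((g * h)⁻¹ * x) - f x) =
        fun x => (f (h⁻¹ * (g⁻¹ * x)) - f (g⁻¹ * x)) + (f (g⁻¹ * x) - f x) := by
      simp only [mul_inv_rev, mul_assoc, sub_add_sub_cancel]
    exact support_add _ _ (hsplit ▸ hx)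
  inv_mem' {g} hg := by
    refine (hg.preimage (mul_right_injective g).injOn).subset fun x hx => ?_
    simp only [mem_support, Set.mem_preimage, inv_mul_cancel_left, inv_inv] at hx ⊢
    rwa [← neg_sub, neg_ne_zero]

theorem indicator_componentCompl_mem_almostStabilizer {S : Finset G} {K : Set G}
    (C : (cayleyGraph S).ComponentCompl K) (hK : K.Finite) (c : R) {s : G} (hs : s ∈ S) :
    s ∈ almostStabilizer (C.supp.indicator fun _ => c) := by
  refine (hK.union (hK.image (s * ·))).subset fun x hx => ?_
  by_contra hxK
  simp only [Set.mem_union, Set.mem_image, not_or, not_exists, not_and] at hxK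
  have hsx : s⁻¹ * x ∉ K := fun h => hxK.2 _ h (mul_inv_cancel_left s x)
  refine hx (sub_eq_zero.mpr ?_)
  rcases eq_or_ne x (s⁻¹ * x) with he | hne
  · rw [← he]
  have hadj := cayleyGraph_adj_inv_mul hs hne
  have hmem : s⁻¹ * x ∈ C.supp ↔ x ∈ C.supp :=
    ⟨fun h => C.mem_of_adj _ _ h hxK.1 hadj.symm, fun h => C.mem_of_adj _ _ h hsx hadj⟩
  by_cases hxC : x ∈ C.supp
  · rw [Set.indicator_of_mem hxC, Set.indicator_of_mem (hmem.mpr hxC)]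
  · rw [Set.indicator_of_notMem hxC, Set.indicator_of_notMem (hmem.not.mpr hxC)]

end almostStabilizer

theorem eq_zero_of_summable_norm_rpow_of_infinite {α E : Type*} [NormedAddCommGroup E]
    {ψ : α → E} {q : ℝ} (hψ : Summable fun x => ‖ψ x‖ ^ q) {T : Set α} (hT : T.Infinite)
    {v : E} (hv : ∀ x ∈ T, ψ x = v) : v = 0 := by
  by_contra hv0
  have hpos : 0 < ‖v‖ ^ q := Real.rpow_pos_of_pos (norm_pos_iff.mpr hv0) q
  refine hT ((Filter.eventually_cofinite.mp
    (hψ.tendsto_cofinite_zero.eventually_lt_const hpos)).subset fun x hx => ?_)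
  simp [hv x hx]

section cocycle

variable {G M : Type*} [Group G] [AddCommGroup M] [Module ℂ M] [TopologicalSpace M]
  (ρ : G →* (M →L[ℂ] M)) (ι : MonoidAlgebra ℂ G →ₗ[ℂ] M) (j : M →ₗ[ℂ] (G → ℂ))

theorem exists_eq_add_const_of_almostStabilizer_eq_top (hj : Injective j)
    (hcomp : ∀ (c : MonoidAlgebra ℂ G) (x : G), j (ι c) x = c.coeff x)
    (hequiv : ∀ (g : G) (f : M) (x : G), j (ρ g f) x = j f (g⁻¹ * x))
    (hvanish : ∀ b : G → M, (∀ g h : G, ρ g (b h) - b (g * h) + b g = 0) →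
      ∃ α : M, ∀ g : G, b g = ρ g α - α)
    {f : G → ℂ} (hf : almostStabilizer f = ⊤) :
    ∃ (α : M) (k : ℂ), ∀ x, f x = j α x + k := by
  let b : G → M := fun g => ι (.ofCoeff (.ofSupportFinite _ (hf ▸ Subgroup.mem_top g)))
  have hb (g x : G) : j (b g) x = f (g⁻¹ * x) - f x := hcomp _ x
  obtain ⟨α, hα⟩ := hvanish b fun g h => hj <| funext fun x => by
    simp only [map_add, map_sub, map_zero, Pi.add_apply, Pi.sub_apply, Pi.zero_apply, hequiv, hb,
      mul_inv_rev, mul_assoc]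
    ring
  refine ⟨α, f 1 - j α 1, fun x => ?_⟩
  have hx := hb x⁻¹ 1
  rw [hα, map_sub, Pi.sub_apply, hequiv, inv_inv, mul_one] at hx
  linear_combination -hx

end cocycle

theorem stmt3_general {G : Type*} [Group G] [Infinite G]
    {M : Type*} [NormedAddCommGroup M] [NormedSpace ℂ M]
    (ρ : G →* (M →L[ℂ] M))
    (p : ℕ)
    (ι : MonoidAlgebra ℂ G →ₗ[ℂ] M)
    (j : M →ₗ[ℂ] (G → ℂ)) (hj : Function.Injective j)
    (hcomp : ∀ (c : MonoidAlgebra ℂ G) (x : G), j (ι c) x = c.coeff x)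
    (hmem : ∀ f : M, Summable fun x => ‖j f x‖ ^ (p : ℝ))
    (hequiv : ∀ (g : G) (f : M) (x : G), j (ρ g f) x = j f (g⁻¹ * x))
    (hvanish : ∀ b : G → M, (∀ g h : G, ρ g (b h) - b (g * h) + b g = 0) →
      ∃ α : M, ∀ g : G, b g = ρ g α - α) :
    ∀ S : Finset G, Subgroup.closure (S : Set G) = ⊤ → (∀ s ∈ S, s⁻¹ ∈ S) →
      Nat.card (cayleyGraph S).end = 1 := by
  intro S hS _
  have : Fact (cayleyGraph S).Preconnected := ⟨cayleyGraph_preconnected hS⟩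
  refine (cayleyGraph S).natCard_end_eq_one_of_infinite_componentCompl_eq
    fun K C D hC hD => by_contra fun hCD => ?_
  have hφ : almostStabilizer (C.supp.indicator fun _ => (1 : ℂ)) = ⊤ :=
    top_le_iff.mp <| hS ▸ (Subgroup.closure_le _).mpr fun s hs =>
      indicator_componentCompl_mem_almostStabilizer C K.finite_toSet 1 hs
  obtain ⟨α, k, hα⟩ :=
    exists_eq_add_const_of_almostStabilizer_eq_top ρ ι j hj hcomp hequiv hvanish hφ
  have hC1 : 1 - k = 0 := eq_zero_of_summable_norm_rpow_of_infinite (hmem α) hC fun x hx => by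
    rw [eq_sub_iff_add_eq, ← hα, Set.indicator_of_mem hx]
  have hD0 : 0 - k = 0 := eq_zero_of_summable_norm_rpow_of_infinite (hmem α) hD fun x hx => by
    have hxC : x ∉ C.supp := Set.disjoint_right.mp (C.pairwise_disjoint hCD) hx
    rw [eq_sub_iff_add_eq, ← hα, Set.indicator_of_notMem hxC]
  exact one_ne_zero (by linear_combination hC1 - hD0)

/-- Let `G` be an infinite, finitely generated group and `M` a Banach space and left
`ℂG`-module with `ℂG ⊆ M ⊆ Lᵖ(G)` on which `G` acts by continuous linear maps (via `ρ`,
with `ι : ℂG → M` and `j : M → (G → ℂ)` realizing the inclusions compatibly with the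
actions).  If `H¹(G,M) = 0` (every 1-cocycle with values in `M` is a coboundary), then
`G` has exactly one end: for every finite symmetric generating set `S` the Cayley graph
of `G` has exactly one end. -/
theorem stmt3 {G : Type*} [Group G] [Infinite G] [Group.FG G]
    {M : Type*} [NormedAddCommGroup M] [NormedSpace ℂ M] [CompleteSpace M]
    (ρ : G →* (M →L[ℂ] M))
    (p : ℕ) (hp : 1 ≤ p)
    (ι : MonoidAlgebra ℂ G →ₗ[ℂ] M) (hι : Function.Injective ι)
    (j : M →ₗ[ℂ] (G → ℂ)) (hj : Function.Injective j)
    (hcomp : ∀ (c : MonoidAlgebra ℂ G) (x : G), j (ι c) x = c.coeff x)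
    (hmem : ∀ f : M, Summable fun x => ‖j f x‖ ^ (p : ℝ))
    (hequiv : ∀ (g : G) (f : M) (x : G), j (ρ g f) x = j f (g⁻¹ * x))
    (hvanish : ∀ b : G → M, (∀ g h : G, ρ g (b h) - b (g * h) + b g = 0) →
      ∃ α : M, ∀ g : G, b g = ρ g α - α) :
    ∀ S : Finset G, Subgroup.closure (S : Set G) = ⊤ → (∀ s ∈ S, s⁻¹ ∈ S) →
      Nat.card (cayleyGraph S).end = 1 :=
  stmt3_general ρ p ι j hj hcomp hmem hequiv hvanish
end

section
/- Let G be an infinite, finitely generated group satisfying the strong F\o lner condition, and let M be a Banach space and \mathbb{C}G-module with \mathbb{C}G \subseteq M \subseteq L^p(G) for some p \geq 2, on which G acts by continuous linear maps, such that ||\alpha||_1 \geq ||\alpha||_M \geq ||\alpha||_p for every \alpha \in \mathbb{C}G. Then there exists a sequence (\beta_n) in M with ||\beta_n||_M = 1 and ||g\beta_n - \beta_n||_M \to 0 for every g in G; consequently H^1(G, M) is not Hausdorff. -/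
/-!
Fix a finite monoid generating set `S` of `G` and Følner sets `Xₙ` for `S` with `|Xₙ| > n`.
The indicators `χₙ = ∑_{x ∈ Xₙ} x ∈ ℂG` have `‖χₙ‖_M ≥ ‖χₙ‖_p = |Xₙ|^{1/p} → ∞`, while
`‖gχₙ - χₙ‖_M ≤ ‖χ_{gXₙ} - χ_{Xₙ}‖₁ = 2|Xₙ \ gXₙ|` stays bounded, by subadditivity along a word
in `S` for `g`; normalising gives almost invariant unit vectors.

Since `G` is infinite and the elements of `M` are `p`-summable, `M` has no nonzero invariant
vectors, so `α ↦ (sα - α)_{s ∈ S}` is injective. If the principal cocycles formed a closed set,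
this map would have closed range, hence be bounded below by the open mapping theorem, which
almost invariant unit vectors rule out.
-/

open Filter MonoidAlgebra

/-- The `ℓ¹` norm of an element of `ℂG`. -/
noncomputable def l1Norm {G : Type*} [Group G] (c : MonoidAlgebra ℂ G) : ℝ :=
  ∑ x ∈ c.coeff.support, ‖c.coeff x‖

/-- The `ℓᵖ` norm of an element of `ℂG`. -/
noncomputable def lpNorm {G : Type*} [Group G] (p : ℕ) (c : MonoidAlgebra ℂ G) : ℝ :=
  (∑ x ∈ c.coeff.support, ‖c.coeff x‖ ^ (p : ℝ)) ^ ((p : ℝ)⁻¹)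
open Finset Topology
open scoped Pointwise

section Translates

variable {G α : Type*} [Group G] [MulAction G α] [DecidableEq α]

lemma card_sdiff_mul_smul_le (a b : G) (X : Finset α) :
    #(X \ (a * b) • X) ≤ #(X \ a • X) + #(X \ b • X) :=
  calc #(X \ (a * b) • X) ≤ #((X \ a • X) ∪ a • (X \ b • X)) := by
        refine card_le_card fun x hx => ?_
        rw [smul_finset_sdiff, ← mul_smul]
        simp only [Finset.mem_sdiff, Finset.mem_union] at hx ⊢
        tauto
    _ ≤ #(X \ a • X) + #(X \ b • X) := by
        grw [card_union_le, card_smul_finset]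

lemma exists_card_sdiff_smul_le_mul {S : Set G} {g : G} (hg : g ∈ Submonoid.closure S) (N : ℕ) :
    ∃ k : ℕ, ∀ X : Finset α, (∀ s ∈ S, #(X \ s • X) ≤ N) → #(X \ g • X) ≤ k * N := by
  induction hg using Submonoid.closure_induction with
  | mem s hs => exact ⟨1, fun X hX => by simpa using hX s hs⟩
  | one => exact ⟨0, fun X _ => by simp⟩
  | mul a b _ _ ha hb =>
    obtain ⟨k, hk⟩ := ha
    obtain ⟨l, hl⟩ := hb
    refine ⟨k + l, fun X hX => ?_⟩
    grw [card_sdiff_mul_smul_le, hk X hX, hl X hX, add_mul]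

end Translates

namespace MonoidAlgebra

section Indicator

variable {G : Type*} [DecidableEq G]

noncomputable def indicator [Monoid G] (X : Finset G) : MonoidAlgebra ℂ G :=
  ∑ x ∈ X, single x 1

lemma coeff_indicator [Monoid G] (X : Finset G) (y : G) :
    (indicator X).coeff y = if y ∈ X then 1 else 0 := by
  simp [indicator, coeff_sum, Finset.sum_apply', Finsupp.single_apply]

variable [Group G]

lemma lpNorm_indicator (p : ℕ) (X : Finset G) : lpNorm p (indicator X) = #X ^ (p : ℝ)⁻¹ := by
  have hsupp : (indicator X).coeff.support = X := by ext; simp [coeff_indicator]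
  rw [lpNorm, hsupp, sum_congr rfl fun x hx => by rw [coeff_indicator, if_pos hx]]
  simp

lemma l1Norm_indicator_sub_le (X Y : Finset G) :
    l1Norm (indicator Y - indicator X) ≤ #(Y \ X) + #(X \ Y) := by
  have hcoeff (x : G) : (indicator Y - indicator X).coeff x =
      (if x ∈ Y then 1 else 0) - (if x ∈ X then 1 else 0) := by
    rw [coeff_sub, Finsupp.sub_apply, coeff_indicator, coeff_indicator]
  have hsupp : (indicator Y - indicator X).coeff.support ⊆ (Y \ X) ∪ (X \ Y) := by
    intro x hx
    rw [Finsupp.mem_support_iff, hcoeff] at hx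
    by_cases hY : x ∈ Y <;> by_cases hX : x ∈ X <;> simp_all
  calc l1Norm (indicator Y - indicator X)
      ≤ ∑ _ ∈ (indicator Y - indicator X).coeff.support, (1 : ℝ) := by
        refine sum_le_sum fun x _ => ?_
        rw [hcoeff]
        split_ifs <;> norm_num
    _ ≤ #((Y \ X) ∪ (X \ Y)) := by
        rw [sum_const, nsmul_one]
        exact_mod_cast card_le_card hsupp
    _ ≤ #(Y \ X) + #(X \ Y) := by exact_mod_cast card_union_le _ _

end Indicator

end MonoidAlgebra

section Coboundaries

variable {𝕜 G M : Type*} [NontriviallyNormedField 𝕜] [Monoid G]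
  [NormedAddCommGroup M] [NormedSpace 𝕜 M] (ρ : G →* (M →L[𝕜] M))

def principalCocycles : Set (G → M) := {f | ∃ α : M, ∀ g : G, f g = ρ g α - α}

noncomputable def coboundaryOn (S : Finset G) : M →L[𝕜] (S → M) :=
  ContinuousLinearMap.pi fun s => ρ s - 1

@[simp]
lemma coboundaryOn_apply (S : Finset G) (α : M) (s : S) : coboundaryOn ρ S α s = ρ s α - α :=
  rfl

variable {ρ}

lemma map_apply_eq_self_of_mem_closure {S : Set G} {α : M} (h : ∀ s ∈ S, ρ s α = α) {g : G}
    (hg : g ∈ Submonoid.closure S) : ρ g α = α := by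
  induction hg using Submonoid.closure_induction with
  | mem s hs => exact h s hs
  | one => simp
  | mul a b _ _ ha hb => rw [map_mul, mul_apply_eq_comp, hb, ha]

lemma exists_tendsto_map_sub_of_mem_closure {S : Set G} {α : ℕ → M}
    (h : ∀ s ∈ S, ∃ L, Tendsto (fun k => ρ s (α k) - α k) atTop (𝓝 L)) {g : G}
    (hg : g ∈ Submonoid.closure S) : ∃ L, Tendsto (fun k => ρ g (α k) - α k) atTop (𝓝 L) := by
  induction hg using Submonoid.closure_induction with
  | mem s hs => exact h s hs
  | one => exact ⟨0, by simp⟩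
  | mul a b _ _ ha hb =>
    obtain ⟨La, hLa⟩ := ha
    obtain ⟨Lb, hLb⟩ := hb
    have hcocycle (k : ℕ) : ρ (a * b) (α k) - α k = ρ a (ρ b (α k) - α k) + (ρ a (α k) - α k) := by
      rw [map_mul, mul_apply_eq_comp, map_sub]
      abel
    simp_rw [hcocycle]
    exact ⟨ρ a Lb + La, (((ρ a).continuous.tendsto Lb).comp hLb).add hLa⟩

lemma coboundaryOn_injective {S : Finset G} (hS : Submonoid.closure (S : Set G) = ⊤)
    (hfix : ∀ α : M, (∀ g, ρ g α = α) → α = 0) :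
    Function.Injective (coboundaryOn ρ S) := by
  refine (injective_iff_map_eq_zero _).mpr fun α hα => hfix α fun g => ?_
  refine map_apply_eq_self_of_mem_closure (fun s hs => ?_) (hS ▸ Submonoid.mem_top g)
  simpa [sub_eq_zero] using congrFun hα ⟨s, hs⟩

lemma isClosed_range_coboundaryOn {S : Finset G} (hS : Submonoid.closure (S : Set G) = ⊤)
    (hB : IsClosed (principalCocycles ρ)) :
    IsClosed (Set.range (coboundaryOn ρ S)) := by
  refine IsSeqClosed.isClosed fun y l hy hl => ?_
  choose α hα using hy
  have hl_apply (s : S) : Tendsto (fun k => ρ s (α k) - α k) atTop (𝓝 (l s)) := by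
    simpa [← hα] using tendsto_pi_nhds.mp hl s
  choose f hf using fun g => exists_tendsto_map_sub_of_mem_closure
    (fun s hs => ⟨l ⟨s, hs⟩, hl_apply ⟨s, hs⟩⟩) (hS ▸ Submonoid.mem_top g)
  obtain ⟨α₀, hα₀⟩ : f ∈ principalCocycles ρ :=
    hB.mem_of_tendsto (tendsto_pi_nhds.mpr hf) (.of_forall fun k => ⟨α k, fun _ => rfl⟩)
  refine ⟨α₀, funext fun s => ?_⟩
  rw [coboundaryOn_apply, ← hα₀, tendsto_nhds_unique (hf s) (hl_apply s)]

end Coboundaries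

section AlmostInvariant

variable {𝕜 ι E : Type*} [RCLike 𝕜] [NormedAddCommGroup E] [NormedSpace 𝕜 E]

lemma exists_norm_eq_one_tendsto_map_sub {T : ι → E →L[𝕜] E} {v : ℕ → E} (hv0 : ∀ n, v n ≠ 0)
    (hv : Tendsto (fun n => ‖v n‖) atTop atTop) (hT : ∀ i, ∃ C, ∀ n, ‖T i (v n) - v n‖ ≤ C) :
    ∃ β : ℕ → E, (∀ n, ‖β n‖ = 1) ∧ ∀ i, Tendsto (fun n => ‖T i (β n) - β n‖) atTop (𝓝 0) := by
  refine ⟨fun n => (‖v n‖⁻¹ : 𝕜) • v n, fun n => norm_smul_inv_norm (hv0 n), fun i => ?_⟩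
  obtain ⟨C, hC⟩ := hT i
  refine squeeze_zero (fun _ => norm_nonneg _) (fun n => ?_)
    (by simpa using hv.inv_tendsto_atTop.mul_const C)
  rw [map_smul, ← smul_sub, norm_smul, norm_inv, RCLike.norm_ofReal, abs_norm]
  exact mul_le_mul_of_nonneg_left (hC n) (by positivity)

end AlmostInvariant

lemma not_isClosed_principalCocycles {𝕜 G M : Type*} [NontriviallyNormedField 𝕜] [Monoid G]
    [Monoid.FG G] [NormedAddCommGroup M] [NormedSpace 𝕜 M] [CompleteSpace M]
    {ρ : G →* (M →L[𝕜] M)} (hfix : ∀ α : M, (∀ g, ρ g α = α) → α = 0) {β : ℕ → M}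
    (hβ1 : ∀ n, ‖β n‖ = 1) (hβ : ∀ g, Tendsto (fun n => ‖ρ g (β n) - β n‖) atTop (𝓝 0)) :
    ¬ IsClosed (principalCocycles ρ) := by
  intro hB
  obtain ⟨S, hS⟩ := Monoid.FG.fg_top (M := G)
  obtain ⟨K, hK⟩ := (coboundaryOn ρ S).antilipschitz_of_injective_of_isClosed_range
    (coboundaryOn_injective hS hfix) (isClosed_range_coboundaryOn hS hB)
  have hTβ : Tendsto (fun n => coboundaryOn ρ S (β n)) atTop (𝓝 (coboundaryOn ρ S 0)) := by
    simpa [tendsto_pi_nhds, ← tendsto_zero_iff_norm_tendsto_zero] using fun s : S => hβ s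
  have hβ0 : Tendsto β atTop (𝓝 0) :=
    (hK.isUniformInducing (coboundaryOn ρ S).uniformContinuous).isInducing.tendsto_nhds_iff.mpr hTβ
  have hnorm : Tendsto (fun _ : ℕ => (1 : ℝ)) atTop (𝓝 0) := by simpa [hβ1] using hβ0.norm
  exact one_ne_zero (tendsto_nhds_unique tendsto_const_nhds hnorm)

section LpModule

variable {G M : Type*} [Group G] [NormedAddCommGroup M] [NormedSpace ℂ M]
  {ρ : G →* (M →L[ℂ] M)} {j : M →ₗ[ℂ] (G → ℂ)}

lemma eq_zero_of_forall_map_eq_self [Infinite G] {p : ℕ} (hp : p ≠ 0) (hj : Function.Injective j)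
    (hmem : ∀ f : M, Summable fun x => ‖j f x‖ ^ (p : ℝ))
    (hequiv : ∀ (g : G) (f : M) (x : G), j (ρ g f) x = j f (g⁻¹ * x))
    {α : M} (hα : ∀ g, ρ g α = α) : α = 0 := by
  have hconst (x : G) : j α x = j α 1 := by simpa [hα x] using hequiv x α x
  have hpow : ‖j α 1‖ ^ (p : ℝ) = 0 := by
    by_contra h
    have : Finite G := Finite.of_summable_const (lt_of_le_of_ne (by positivity) (Ne.symm h))
      (by simpa only [hconst] using hmem α)
    exact not_finite G
  have h1 : j α 1 = 0 := by simpa [hp] using hpow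
  exact (injective_iff_map_eq_zero j).mp hj α (funext fun x => by rw [hconst, h1]; rfl)

variable [DecidableEq G] {ι : MonoidAlgebra ℂ G →ₗ[ℂ] M}

lemma map_indicator_eq_indicator_smul (hj : Function.Injective j)
    (hcomp : ∀ c x, j (ι c) x = c.coeff x)
    (hequiv : ∀ (g : G) (f : M) (x : G), j (ρ g f) x = j f (g⁻¹ * x)) (g : G) (X : Finset G) :
    ρ g (ι (indicator X)) = ι (indicator (g • X)) :=
  hj <| funext fun x => by
    simp only [hequiv, hcomp, coeff_indicator, ← smul_eq_mul, inv_smul_mem_iff]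

lemma norm_map_indicator_sub_le (hj : Function.Injective j)
    (hcomp : ∀ c x, j (ι c) x = c.coeff x)
    (hequiv : ∀ (g : G) (f : M) (x : G), j (ρ g f) x = j f (g⁻¹ * x))
    (hl1 : ∀ c, ‖ι c‖ ≤ l1Norm c) (g : G) (X : Finset G) :
    ‖ρ g (ι (indicator X)) - ι (indicator X)‖ ≤ 2 * #(X \ g • X) := by
  rw [map_indicator_eq_indicator_smul hj hcomp hequiv, ← map_sub]
  grw [hl1, l1Norm_indicator_sub_le, card_sdiff_comm (card_smul_finset g X)]
  linarith

lemma exists_norm_eq_one_tendsto_of_folner {p : ℕ} (hp : p ≠ 0) (hj : Function.Injective j)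
    (hcomp : ∀ c x, j (ι c) x = c.coeff x)
    (hequiv : ∀ (g : G) (f : M) (x : G), j (ρ g f) x = j f (g⁻¹ * x))
    (hnorm : ∀ c, ‖ι c‖ ≤ l1Norm c ∧ lpNorm p c ≤ ‖ι c‖) {S : Finset G}
    (hS : Submonoid.closure (S : Set G) = ⊤) {N : ℕ} {X : ℕ → Finset G} (hX : ∀ n, n < #(X n))
    (hXS : ∀ n, ∀ s ∈ S, #(X n \ s • X n) ≤ N) :
    ∃ β : ℕ → M, (∀ n, ‖β n‖ = 1) ∧ ∀ g, Tendsto (fun n => ‖ρ g (β n) - β n‖) atTop (𝓝 0) := by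
  have hv_lower (n : ℕ) : (n : ℝ) ^ (p : ℝ)⁻¹ < ‖ι (indicator (X n))‖ :=
    calc (n : ℝ) ^ (p : ℝ)⁻¹ < #(X n) ^ (p : ℝ)⁻¹ := by
          gcongr
          exact_mod_cast hX n
      _ = lpNorm p (indicator (X n)) := (lpNorm_indicator p (X n)).symm
      _ ≤ ‖ι (indicator (X n))‖ := (hnorm _).2
  have hv_top : Tendsto (fun n => ‖ι (indicator (X n))‖) atTop atTop :=
    tendsto_atTop_mono (fun n => (hv_lower n).le)
      ((tendsto_rpow_atTop (by positivity)).comp tendsto_natCast_atTop_atTop)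
  have hv_displacement (g : G) :
      ∃ C, ∀ n, ‖ρ g (ι (indicator (X n))) - ι (indicator (X n))‖ ≤ C := by
    obtain ⟨k, hk⟩ := exists_card_sdiff_smul_le_mul (α := G) (hS ▸ Submonoid.mem_top g) N
    refine ⟨2 * (k * N), fun n => ?_⟩
    grw [norm_map_indicator_sub_le hj hcomp hequiv (fun c => (hnorm c).1), hk (X n) (hXS n)]
    norm_num
  exact exists_norm_eq_one_tendsto_map_sub
    (fun n => norm_pos_iff.mp ((by positivity : (0 : ℝ) ≤ _).trans_lt (hv_lower n))) hv_top
    hv_displacement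

end LpModule

theorem stmt8_general {G : Type*} [Group G] [Infinite G] [Group.FG G] [DecidableEq G]
    {M : Type*} [NormedAddCommGroup M] [NormedSpace ℂ M] [CompleteSpace M]
    (ρ : G →* (M →L[ℂ] M))
    (p : ℕ) (hp : 2 ≤ p)
    (ι : MonoidAlgebra ℂ G →ₗ[ℂ] M)
    (j : M →ₗ[ℂ] (G → ℂ)) (hj : Function.Injective j)
    (hcomp : ∀ (c : MonoidAlgebra ℂ G) (x : G), j (ι c) x = c.coeff x)
    (hmem : ∀ f : M, Summable fun x => ‖j f x‖ ^ (p : ℝ))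
    (hequiv : ∀ (g : G) (f : M) (x : G), j (ρ g f) x = j f (g⁻¹ * x))
    (hnorm : ∀ c : MonoidAlgebra ℂ G, ‖ι c‖ ≤ l1Norm c ∧ lpNorm p c ≤ ‖ι c‖)
    (hSF : ∀ S : Finset G, ∃ N : ℕ, ∀ m : ℕ, ∃ X : Finset G,
      X.card > m ∧ ∀ g ∈ S, (X \ X.image (fun x => g * x)).card < N) :
    (∃ β : ℕ → M, (∀ n, ‖β n‖ = 1) ∧
      ∀ g : G, Tendsto (fun n => ‖ρ g (β n) - β n‖) atTop (nhds 0)) ∧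
    ¬ IsClosed {f : G → M | ∃ α : M, ∀ g : G, f g = ρ g α - α} := by
  have hp0 : p ≠ 0 := by omega
  obtain ⟨S, hS⟩ := Monoid.FG.fg_top (M := G)
  obtain ⟨N, hN⟩ := hSF S
  choose X hX hXS using hN
  obtain ⟨β, hβ1, hβ⟩ := exists_norm_eq_one_tendsto_of_folner hp0 hj hcomp hequiv hnorm hS hX
    fun n s hs => (hXS n s hs).le
  exact ⟨⟨β, hβ1, hβ⟩, not_isClosed_principalCocycles
    (fun α => eq_zero_of_forall_map_eq_self hp0 hj hmem hequiv) hβ1 hβ⟩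

/-- Let `G` be an infinite, finitely generated group satisfying the strong Følner condition,
and `M` a Banach space and `ℂG`-module with `ℂG ⊆ M ⊆ Lᵖ(G)` for some `p ≥ 2`, on which `G`
acts by continuous linear maps, such that `‖α‖₁ ≥ ‖α‖_M ≥ ‖α‖ₚ` for every `α ∈ ℂG`.  Then
there is a sequence `(β_n)` in `M` with `‖β_n‖ = 1` and `‖gβ_n - β_n‖ → 0` for every `g ∈ G`;
consequently `H¹(G,M)` is not Hausdorff (the set of principal cocycles is not closed in the
topology of pointwise convergence). -/
theorem stmt8 {G : Type*} [Group G] [Infinite G] [Group.FG G] [DecidableEq G]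
    {M : Type*} [NormedAddCommGroup M] [NormedSpace ℂ M] [CompleteSpace M]
    (ρ : G →* (M →L[ℂ] M))
    (p : ℕ) (hp : 2 ≤ p)
    (ι : MonoidAlgebra ℂ G →ₗ[ℂ] M) (hι : Function.Injective ι)
    (j : M →ₗ[ℂ] (G → ℂ)) (hj : Function.Injective j)
    (hcomp : ∀ (c : MonoidAlgebra ℂ G) (x : G), j (ι c) x = c.coeff x)
    (hmem : ∀ f : M, Summable fun x => ‖j f x‖ ^ (p : ℝ))
    (hequiv : ∀ (g : G) (f : M) (x : G), j (ρ g f) x = j f (g⁻¹ * x))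
    (hnorm : ∀ c : MonoidAlgebra ℂ G, ‖ι c‖ ≤ l1Norm c ∧ lpNorm p c ≤ ‖ι c‖)
    (hSF : ∀ S : Finset G, ∃ N : ℕ, ∀ m : ℕ, ∃ X : Finset G,
      X.card > m ∧ ∀ g ∈ S, (X \ X.image (fun x => g * x)).card < N) :
    (∃ β : ℕ → M, (∀ n, ‖β n‖ = 1) ∧
      ∀ g : G, Tendsto (fun n => ‖ρ g (β n) - β n‖) atTop (nhds 0)) ∧
    ¬ IsClosed {f : G → M | ∃ α : M, ∀ g : G, f g = ρ g α - α} :=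
  stmt8_general ρ p hp ι j hj hcomp hmem hequiv hnorm hSF
end

section
/- Let G be a group satisfying the strong F\o lner condition, S_n an increasing enumeration of finite subsets with union G, and X_n finite subsets with |X_n| > (n N_n)^p and |X_n \setminus g X_n| < N_n for all g \in S_n (where N_n witnesses the strong F\o lner condition for S_n). Let \beta_n = (\sum_{x\in X_n} x)/||\sum_{x\in X_n} x||_M. Then for each fixed g \in G, ||g\beta_n - \beta_n||_M \leq 2/n for all sufficiently large n, provided ||\alpha||_1 \geq ||\alpha||_M \geq ||\alpha||_p on \mathbb{C}G. -/
open Filter MonoidAlgebra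

open Finset
open scoped symmDiff

section IndicatorSums

variable {G : Type*} [Group G] [DecidableEq G]

lemma coeff_sum_of (X : Finset G) (y : G) :
    (∑ x ∈ X, of ℂ G x).coeff y = if y ∈ X then 1 else 0 := by
  simp [coeff_sum, Finset.sum_apply', of_apply, Finsupp.single_apply]

lemma support_coeff_sum_of (X : Finset G) : (∑ x ∈ X, of ℂ G x).coeff.support = X := by
  ext y
  rw [Finsupp.mem_support_iff, coeff_sum_of]
  by_cases hy : y ∈ X <;> simp [hy]

lemma lpNorm_sum_of (p : ℕ) (X : Finset G) :
    lpNorm p (∑ x ∈ X, of ℂ G x) = (#X : ℝ) ^ ((p : ℝ)⁻¹) := by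
  rw [lpNorm, support_coeff_sum_of, card_eq_sum_ones, Nat.cast_sum]
  congr 1
  refine sum_congr rfl fun y hy => ?_
  rw [coeff_sum_of, if_pos hy]
  simp

lemma natCast_lt_lpNorm_sum_of {p m : ℕ} (hp : 0 < p) {X : Finset G} (h : m ^ p < #X) :
    (m : ℝ) < lpNorm p (∑ x ∈ X, of ℂ G x) := by
  rw [lpNorm_sum_of, Real.lt_rpow_inv_iff_of_pos (by positivity) (by positivity) (by positivity),
    Real.rpow_natCast]
  exact_mod_cast h

lemma of_mul_sum_of (g : G) (X : Finset G) :
    of ℂ G g * ∑ x ∈ X, of ℂ G x = ∑ x ∈ X.image (g * ·), of ℂ G x := by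
  rw [mul_sum, sum_image fun x _ y _ h => mul_left_cancel h]
  simp only [map_mul]

lemma l1Norm_sum_of_sub_sum_of (A B : Finset G) :
    l1Norm (∑ x ∈ A, of ℂ G x - ∑ x ∈ B, of ℂ G x) = #(A ∆ B) := by
  have hcoeff : ∀ y, (∑ x ∈ A, of ℂ G x - ∑ x ∈ B, of ℂ G x).coeff y =
      (if y ∈ A then 1 else 0) - (if y ∈ B then 1 else 0) := fun y => by
    rw [coeff_sub, Finsupp.sub_apply, coeff_sum_of, coeff_sum_of]
  have hsupp : (∑ x ∈ A, of ℂ G x - ∑ x ∈ B, of ℂ G x).coeff.support = A ∆ B := by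
    ext y
    rw [Finsupp.mem_support_iff, hcoeff, mem_symmDiff]
    by_cases ha : y ∈ A <;> by_cases hb : y ∈ B <;> simp [ha, hb]
  rw [l1Norm, hsupp, card_eq_sum_ones, Nat.cast_sum]
  refine sum_congr rfl fun y hy => ?_
  rcases mem_symmDiff.1 hy with ⟨ha, hb⟩ | ⟨hb, ha⟩ <;> rw [hcoeff] <;> simp [ha, hb]

lemma l1Norm_of_mul_sum_of_sub (g : G) (X : Finset G) :
    l1Norm (of ℂ G g * ∑ x ∈ X, of ℂ G x - ∑ x ∈ X, of ℂ G x) =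
      2 * #(X \ X.image (g * ·)) := by
  have hcard : #(X.image (g * ·)) = #X := card_image_of_injective X (mul_right_injective g)
  rw [of_mul_sum_of, l1Norm_sum_of_sub_sum_of, Finset.symmDiff_def,
    card_union_of_disjoint disjoint_sdiff_sdiff, card_sdiff_comm hcard]
  push_cast
  ring

end IndicatorSums

lemma norm_apply_inv_norm_smul_sub {M : Type*} [NormedAddCommGroup M] [NormedSpace ℂ M]
    (T : M →L[ℂ] M) (v : M) : ‖T (‖v‖⁻¹ • v) - ‖v‖⁻¹ • v‖ = ‖T v - v‖ / ‖v‖ := by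
  rw [T.map_smul_of_tower, ← smul_sub, norm_smul, norm_inv, norm_norm, inv_mul_eq_div]

lemma norm_apply_normalized_sum_of_sub_le {G : Type*} [Group G] [DecidableEq G]
    {M : Type*} [NormedAddCommGroup M] [NormedSpace ℂ M]
    (ρ : G →* (M →L[ℂ] M)) (ι : MonoidAlgebra ℂ G →ₗ[ℂ] M)
    (hequivι : ∀ (g : G) (c : MonoidAlgebra ℂ G), ι (of ℂ G g * c) = ρ g (ι c))
    (hl1 : ∀ c, ‖ι c‖ ≤ l1Norm c) {p : ℕ} (hp : 0 < p) (hlp : ∀ c, lpNorm p c ≤ ‖ι c‖)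
    {g : G} {X : Finset G} {n N : ℕ} (hn : 0 < n) (hcard : (n * N) ^ p < #X)
    (hfol : #(X \ X.image (g * ·)) < N) :
    ‖ρ g (‖ι (∑ x ∈ X, of ℂ G x)‖⁻¹ • ι (∑ x ∈ X, of ℂ G x)) -
      ‖ι (∑ x ∈ X, of ℂ G x)‖⁻¹ • ι (∑ x ∈ X, of ℂ G x)‖ ≤ 2 / n := by
  set α := ∑ x ∈ X, of ℂ G x
  have hN : 0 < N := pos_of_gt hfol
  have hlarge : (n * N : ℝ) < ‖ι α‖ := by
    exact_mod_cast (natCast_lt_lpNorm_sum_of hp hcard).trans_le (hlp α)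
  have hsmall : ‖ρ g (ι α) - ι α‖ ≤ 2 * N := by
    rw [← hequivι, ← map_sub]
    calc ‖ι (of ℂ G g * α - α)‖ ≤ l1Norm (of ℂ G g * α - α) := hl1 _
      _ = 2 * #(X \ X.image (g * ·)) := l1Norm_of_mul_sum_of_sub g X
      _ ≤ 2 * N := by gcongr
  rw [norm_apply_inv_norm_smul_sub]
  calc ‖ρ g (ι α) - ι α‖ / ‖ι α‖ ≤ 2 * N / (n * N) :=
        div_le_div₀ (by positivity) hsmall (by positivity) hlarge.le
    _ = 2 / n := by field_simp

theorem stmt9_general {G : Type*} [Group G] [DecidableEq G]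
    {M : Type*} [NormedAddCommGroup M] [NormedSpace ℂ M]
    (ρ : G →* (M →L[ℂ] M))
    (p : ℕ) (hp : 2 ≤ p)
    (ι : MonoidAlgebra ℂ G →ₗ[ℂ] M)
    (hequivι : ∀ (g : G) (c : MonoidAlgebra ℂ G), ι (of ℂ G g * c) = ρ g (ι c))
    (hnorm : ∀ c : MonoidAlgebra ℂ G, ‖ι c‖ ≤ l1Norm c ∧ lpNorm p c ≤ ‖ι c‖)
    (S : ℕ → Finset G) (hmono : Monotone S) (hunion : ∀ g : G, ∃ n, g ∈ S n)
    (N : ℕ → ℕ) (X : ℕ → Finset G)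
    (hcard : ∀ n, (X n).card > (n * N n) ^ p)
    (hfol : ∀ n, ∀ g ∈ S n, ((X n) \ (X n).image (fun x => g * x)).card < N n)
    (β : ℕ → M)
    (hβ : ∀ n, β n = ‖ι (∑ x ∈ X n, of ℂ G x)‖⁻¹ • ι (∑ x ∈ X n, of ℂ G x)) :
    ∀ g : G, ∀ᶠ n in atTop, ‖ρ g (β n) - β n‖ ≤ 2 / n := by
  intro g
  obtain ⟨n₀, hn₀⟩ := hunion g
  filter_upwards [eventually_ge_atTop (max n₀ 1)] with n hn
  rw [hβ n]
  exact norm_apply_normalized_sum_of_sub_le ρ ι hequivι (fun c => (hnorm c).1) (by omega)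
    (fun c => (hnorm c).2) (by omega) (hcard n) (hfol n g (hmono (le_of_max_le_left hn) hn₀))

/-- Let `G` satisfy the strong Følner condition with witnesses: `S n` an increasing family
of finite sets with union `G`, `N n ∈ ℕ`, and `X n` finite with `|X n| > (n·N n)^p` and
`|X n \ g X n| < N n` for all `g ∈ S n`.  Let `β n = (∑_{x ∈ X n} x)/‖∑_{x ∈ X n} x‖_M`.
If `‖α‖₁ ≥ ‖α‖_M ≥ ‖α‖ₚ` on `ℂG`, then for each fixed `g ∈ G` we have
`‖gβ_n - β_n‖_M ≤ 2/n` for all sufficiently large `n`. -/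
theorem stmt9 {G : Type*} [Group G] [Infinite G] [Group.FG G] [DecidableEq G]
    {M : Type*} [NormedAddCommGroup M] [NormedSpace ℂ M] [CompleteSpace M]
    (ρ : G →* (M →L[ℂ] M))
    (p : ℕ) (hp : 2 ≤ p)
    (ι : MonoidAlgebra ℂ G →ₗ[ℂ] M) (hι : Function.Injective ι)
    (hequivι : ∀ (g : G) (c : MonoidAlgebra ℂ G), ι (of ℂ G g * c) = ρ g (ι c))
    (hnorm : ∀ c : MonoidAlgebra ℂ G, ‖ι c‖ ≤ l1Norm c ∧ lpNorm p c ≤ ‖ι c‖)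
    (S : ℕ → Finset G) (hmono : Monotone S) (hunion : ∀ g : G, ∃ n, g ∈ S n)
    (N : ℕ → ℕ) (X : ℕ → Finset G)
    (hcard : ∀ n, (X n).card > (n * N n) ^ p)
    (hfol : ∀ n, ∀ g ∈ S n, ((X n) \ (X n).image (fun x => g * x)).card < N n)
    (β : ℕ → M)
    (hβ : ∀ n, β n = ‖ι (∑ x ∈ X n, of ℂ G x)‖⁻¹ • ι (∑ x ∈ X n, of ℂ G x)) :
    ∀ g : G, ∀ᶠ n in atTop, ‖ρ g (β n) - β n‖ ≤ 2 / n :=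
  stmt9_general ρ p hp ι hequivι hnorm S hmono hunion N X hcard hfol β hβ
end

section
/- For every n \geq 1 there exists a sequence (f_i) of continuous functions on \mathbb{T}^n with sup-norm 1 such that for every (m_1,...,m_n) \in \mathbb{Z}^n, the sup-norm of (z_1^{m_1}\cdots z_n^{m_n} - 1) f_i(z_1,...,z_n) tends to 0 as i \to \infty. Consequently, H^1(\mathbb{Z}^n, C^*_{red}(\mathbb{Z}^n)) is not Hausdorff. -/
open Filter Topology

/-!
Write `|z - 1|` for the sup-distance from `z ∈ 𝕋ⁿ` to `1`.
For part one, take the bumps `f_j(z) = 1 / max 1 ((j + 1) |z - 1|)`. Since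
`|z^m - 1| ≤ (∑ |m_k|) |z - 1|`, the products `(z^m - 1) f_j` are uniformly `O(1/j)`.

For part two, the cochain `b_m(z) = (z^m - 1) / √|z - 1|` is continuous (it is `O(√|z - 1|)`
near `1`) and is the uniform limit of the coboundaries of the truncations
`α_j = 1 / √(max |z - 1| (1 / (j + 1)))`. If `b` were the coboundary of some continuous `α`,
cancelling `z_k - 1` in `b_{e_k}` would force `α(z) = 1 / √|z - 1|` for `z ≠ 1`, which is
unbounded near `1` since `1` is not isolated in the connected torus.
-/

lemma norm_prod_sub_one_le_sum {ι R : Type*} [SeminormedCommRing R] (s : Finset ι)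
    (u : ι → R) (hu : ∀ i ∈ s, ‖u i‖ ≤ 1) : ‖∏ i ∈ s, u i - 1‖ ≤ ∑ i ∈ s, ‖u i - 1‖ := by
  classical
  induction s using Finset.induction_on with
  | empty => simp
  | insert a s ha ih =>
    rw [Finset.prod_insert ha, Finset.sum_insert ha]
    have hua : ‖u a‖ ≤ 1 := hu a (Finset.mem_insert_self a s)
    have hs := ih fun i hi => hu i (Finset.mem_insert_of_mem hi)
    calc ‖u a * ∏ i ∈ s, u i - 1‖ = ‖u a * (∏ i ∈ s, u i - 1) + (u a - 1)‖ := by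
          congr 1; ring
      _ ≤ ‖u a‖ * ‖∏ i ∈ s, u i - 1‖ + ‖u a - 1‖ :=
          (norm_add_le _ _).trans (add_le_add_left (norm_mul_le _ _) _)
      _ ≤ 1 * ∑ i ∈ s, ‖u i - 1‖ + ‖u a - 1‖ := by gcongr
      _ = ‖u a - 1‖ + ∑ i ∈ s, ‖u i - 1‖ := by ring

namespace Circle

instance : Nontrivial Circle := ⟨-1, 1, neg_ne_self 1⟩

lemma norm_pow_sub_one_le (u : Circle) (k : ℕ) : ‖(u : ℂ) ^ k - 1‖ ≤ k * ‖(u : ℂ) - 1‖ := by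
  simpa using norm_prod_sub_one_le_sum (Finset.range k) (fun _ => (u : ℂ))
    fun _ _ => (norm_coe u).le

lemma norm_inv_sub_one (u : Circle) : ‖(u : ℂ)⁻¹ - 1‖ = ‖(u : ℂ) - 1‖ := by
  rw [← coe_inv, coe_inv_eq_conj, ← Complex.norm_conj, map_sub, Complex.conj_conj,
    map_one]

lemma norm_zpow_sub_one_le (u : Circle) (m : ℤ) :
    ‖(u : ℂ) ^ m - 1‖ ≤ |(m : ℝ)| * ‖(u : ℂ) - 1‖ := by
  obtain ⟨k, rfl | rfl⟩ := Int.eq_nat_or_neg m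
  · simpa using u.norm_pow_sub_one_le k
  · simpa [← u.norm_inv_sub_one] using u⁻¹.norm_pow_sub_one_le k

end Circle

section Metric

variable {X : Type*} [PseudoMetricSpace X] (x₀ : X)

noncomputable def distBump (j : ℕ) : C(X, ℂ) where
  toFun x := ((max 1 ((j + 1) * dist x x₀))⁻¹ : ℝ)
  continuous_toFun := by
    refine Complex.continuous_ofReal.comp (Continuous.inv₀ (by fun_prop) fun x => ?_)
    exact (zero_lt_one.trans_le (le_max_left _ _)).ne'

lemma norm_distBump_apply (j : ℕ) (x : X) :
    ‖distBump x₀ j x‖ = (max 1 ((j + 1) * dist x x₀))⁻¹ :=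
  (Complex.norm_real _).trans
    (Real.norm_of_nonneg (inv_nonneg.2 (zero_le_one.trans (le_max_left _ _))))

lemma norm_distBump [CompactSpace X] (j : ℕ) : ‖distBump x₀ j‖ = 1 := by
  refine le_antisymm ((ContinuousMap.norm_le _ zero_le_one).2 fun x => ?_) ?_
  · rw [norm_distBump_apply]
    exact inv_le_one_of_one_le₀ (le_max_left _ _)
  · simpa [norm_distBump_apply] using (distBump x₀ j).norm_coe_le_norm x₀

lemma dist_mul_norm_distBump_le (j : ℕ) (x : X) :
    dist x x₀ * ‖distBump x₀ j x‖ ≤ 1 / (j + 1) := by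
  rw [norm_distBump_apply, ← div_eq_mul_inv, div_le_div_iff₀ (by positivity) (by positivity)]
  linarith [le_max_right 1 ((j + 1) * dist x x₀)]

noncomputable def truncInvSqrtDist (j : ℕ) : C(X, ℂ) where
  toFun x := ((√(max (dist x x₀) (1 / (j + 1))))⁻¹ : ℝ)
  continuous_toFun := by
    refine Complex.continuous_ofReal.comp (Continuous.inv₀ (by fun_prop) fun x => ?_)
    exact (Real.sqrt_pos.2 (lt_max_of_lt_right (by positivity))).ne'

end Metric

lemma mul_abs_inv_sqrt_max_sub_inv_sqrt_le (t ε : ℝ) :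
    t * |(√(max t ε))⁻¹ - (√t)⁻¹| ≤ √ε := by
  rcases le_or_gt t 0 with ht | ht
  · exact (mul_nonpos_of_nonpos_of_nonneg ht (abs_nonneg _)).trans (Real.sqrt_nonneg ε)
  rcases le_or_gt ε t with hεt | htε
  · simp [max_eq_left hεt]
  rw [max_eq_right htε.le, abs_sub_comm, abs_of_nonneg (sub_nonneg.2 ?_)]
  · calc t * ((√t)⁻¹ - (√ε)⁻¹) ≤ t * (√t)⁻¹ := by gcongr; exact sub_le_self _ (by positivity)
      _ = √t := Real.div_sqrt
      _ ≤ √ε := Real.sqrt_le_sqrt htε.le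
  · gcongr

section Torus

variable {n : ℕ}

noncomputable def torusChar (m : Fin n → ℤ) : C(Fin n → Circle, ℂ) where
  toFun z := ∏ k, (z k : ℂ) ^ m k
  continuous_toFun := continuous_finsetProd _ fun k _ =>
    (continuous_subtype_val.comp (continuous_apply k)).zpow₀ _
      fun z => .inl (z k).coe_ne_zero

lemma norm_torusChar_sub_one_le (m : Fin n → ℤ) (z : Fin n → Circle) :
    ‖torusChar m z - 1‖ ≤ (∑ k, |(m k : ℝ)|) * dist z 1 :=
  calc ‖torusChar m z - 1‖ ≤ ∑ k, ‖(z k : ℂ) ^ m k - 1‖ :=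
        norm_prod_sub_one_le_sum _ _ fun k _ => by simp [Circle.norm_coe]
    _ ≤ ∑ k, |(m k : ℝ)| * dist z 1 := Finset.sum_le_sum fun k _ =>
        (Circle.norm_zpow_sub_one_le _ _).trans (by
          gcongr
          rw [← dist_eq_norm]
          exact dist_le_pi_dist z 1 k)
    _ = (∑ k, |(m k : ℝ)|) * dist z 1 := (Finset.sum_mul ..).symm

lemma torusChar_single (k : Fin n) (z : Fin n → Circle) :
    torusChar (Pi.single k 1) z = z k := by
  rw [torusChar, ContinuousMap.coe_mk, Fintype.prod_eq_single k fun j hj => by simp [hj]]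
  simp

noncomputable def torusCoboundary (α : C(Fin n → Circle, ℂ)) (m : Fin n → ℤ) :
    C(Fin n → Circle, ℂ) :=
  torusChar m * α - α

lemma tendsto_iSup_norm_torusChar_mul_distBump_sub (m : Fin n → ℤ) :
    Tendsto (fun j => ⨆ z, ‖torusChar m z * distBump 1 j z - distBump 1 j z‖) atTop
      (𝓝 0) := by
  set C := ∑ k, |(m k : ℝ)|
  have hbound : Tendsto (fun j : ℕ => C * (1 / (j + 1))) atTop (𝓝 0) := by
    simpa using tendsto_one_div_add_atTop_nhds_zero_nat.const_mul C
  refine squeeze_zero (fun j => Real.iSup_nonneg fun z => norm_nonneg _)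
    (fun j => ciSup_le fun z => ?_) hbound
  calc ‖torusChar m z * distBump 1 j z - distBump 1 j z‖
      = ‖torusChar m z - 1‖ * ‖distBump 1 j z‖ := by rw [← sub_one_mul, norm_mul]
    _ ≤ C * dist z 1 * ‖distBump 1 j z‖ := by gcongr; exact norm_torusChar_sub_one_le m z
    _ ≤ C * (1 / (j + 1)) := by
        rw [mul_assoc]; gcongr; exact dist_mul_norm_distBump_le 1 j z

lemma norm_torusCoboundary_truncInvSqrtDist_sub_le (m : Fin n → ℤ) (j : ℕ)
    (z : Fin n → Circle) :
    ‖torusCoboundary (truncInvSqrtDist 1 j) m z -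
        (torusChar m z - 1) * ((√(dist z 1))⁻¹ : ℝ)‖ ≤ (∑ k, |(m k : ℝ)|) * √(1 / (j + 1)) := by
  set t := dist z 1
  have h : torusCoboundary (truncInvSqrtDist 1 j) m z - (torusChar m z - 1) * ((√t)⁻¹ : ℝ) =
      (torusChar m z - 1) * (((√(max t (1 / (j + 1))))⁻¹ - (√t)⁻¹ : ℝ) : ℂ) := by
    simp only [torusCoboundary, truncInvSqrtDist, ContinuousMap.sub_apply,
      ContinuousMap.mul_apply, ContinuousMap.coe_mk]
    push_cast; ring
  rw [h, norm_mul, Complex.norm_real, Real.norm_eq_abs]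
  calc ‖torusChar m z - 1‖ * |(√(max t (1 / (j + 1))))⁻¹ - (√t)⁻¹|
      ≤ (∑ k, |(m k : ℝ)|) * t * |(√(max t (1 / (j + 1))))⁻¹ - (√t)⁻¹| := by
        gcongr; exact norm_torusChar_sub_one_le m z
    _ ≤ (∑ k, |(m k : ℝ)|) * √(1 / (j + 1)) := by
        rw [mul_assoc]; gcongr; exact mul_abs_inv_sqrt_max_sub_inv_sqrt_le _ _

lemma tendstoUniformly_torusCoboundary_truncInvSqrtDist (m : Fin n → ℤ) :
    TendstoUniformly (fun j z => torusCoboundary (truncInvSqrtDist 1 j) m z)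
      (fun z => (torusChar m z - 1) * ((√(dist z 1))⁻¹ : ℝ)) atTop := by
  have hbound : Tendsto (fun j : ℕ => (∑ k, |(m k : ℝ)|) * √(1 / (j + 1))) atTop (𝓝 0) := by
    simpa using ((Real.continuous_sqrt.tendsto 0).comp
      tendsto_one_div_add_atTop_nhds_zero_nat).const_mul (∑ k, |(m k : ℝ)|)
  refine Metric.tendstoUniformly_iff.2 fun ε hε => ?_
  filter_upwards [hbound.eventually (gt_mem_nhds hε)] with j hj z
  rw [dist_comm, dist_eq_norm]
  exact (norm_torusCoboundary_truncInvSqrtDist_sub_le m j z).trans_lt hj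

noncomputable def singularCocycle (m : Fin n → ℤ) : C(Fin n → Circle, ℂ) where
  toFun z := (torusChar m z - 1) * ((√(dist z 1))⁻¹ : ℝ)
  continuous_toFun := (tendstoUniformly_torusCoboundary_truncInvSqrtDist m).continuous
    (.of_forall fun _ => (torusCoboundary _ m).continuous)

lemma tendsto_torusCoboundary_truncInvSqrtDist :
    Tendsto (fun j => torusCoboundary (n := n) (truncInvSqrtDist 1 j)) atTop
      (𝓝 singularCocycle) :=
  tendsto_pi_nhds.2 fun m => ContinuousMap.tendsto_iff_tendstoUniformly.2
    (tendstoUniformly_torusCoboundary_truncInvSqrtDist m)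

lemma mul_sqrt_dist_eq_one_of_torusCoboundary_eq {α : C(Fin n → Circle, ℂ)}
    (hα : torusCoboundary α = singularCocycle) {z : Fin n → Circle} (hz : z ≠ 1) :
    α z * √(dist z 1) = 1 := by
  obtain ⟨k, hk⟩ := Function.ne_iff.1 hz
  have hk' : (z k : ℂ) - 1 ≠ 0 := sub_ne_zero.2 (Circle.coe_eq_one.not.2 hk)
  have hsqrt : (√(dist z 1) : ℂ) ≠ 0 :=
    Complex.ofReal_ne_zero.2 (Real.sqrt_pos.2 (dist_pos.2 hz)).ne'
  have h := congrArg (fun b => b (Pi.single k 1) z) hα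
  simp only [torusCoboundary, singularCocycle, ContinuousMap.sub_apply,
    ContinuousMap.mul_apply, ContinuousMap.coe_mk, torusChar_single, ← sub_one_mul] at h
  rw [mul_left_cancel₀ hk' h, Complex.ofReal_inv, inv_mul_cancel₀ hsqrt]

lemma torusCoboundary_ne_singularCocycle [NeZero n] (α : C(Fin n → Circle, ℂ)) :
    torusCoboundary α ≠ singularCocycle := by
  intro hα
  have hcont : Tendsto (fun z => α z * √(dist z 1)) (𝓝[≠] 1) (𝓝 0) := by
    have : Continuous fun z => α z * √(dist z 1) := by fun_prop
    simpa using (this.tendsto 1).mono_left nhdsWithin_le_nhds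
  have hone : Tendsto (fun z => α z * √(dist z 1)) (𝓝[≠] 1) (𝓝 1) :=
    tendsto_const_nhds.congr' (eventually_nhdsWithin_of_forall fun z hz =>
      (mul_sqrt_dist_eq_one_of_torusCoboundary_eq hα hz).symm)
  exact zero_ne_one (tendsto_nhds_unique hcont hone)

end Torus

/-- For every `n ≥ 1` there is a sequence `(f_i)` in `C(𝕋ⁿ)` of sup-norm `1` such that for
every `(m_1,…,m_n) ∈ ℤⁿ` the sup-norm of `(z_1^{m_1}⋯z_n^{m_n} - 1) f_i` tends to `0`.
Consequently `H¹(ℤⁿ, C*_red(ℤⁿ)) = H¹(ℤⁿ, C(𝕋ⁿ))` is not Hausdorff: the set of principal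
cocycles is not closed in the topology of pointwise convergence. -/
theorem stmt11 (n : ℕ) (hn : 1 ≤ n) :
    (∃ f : ℕ → C(Fin n → Circle, ℂ), (∀ i, ‖f i‖ = 1) ∧
      ∀ m : Fin n → ℤ,
        Tendsto (fun i => ⨆ z : Fin n → Circle,
            ‖(∏ k, (z k : ℂ) ^ (m k)) * f i z - f i z‖) atTop (nhds 0)) ∧
    ¬ IsClosed {b : (Fin n → ℤ) → C(Fin n → Circle, ℂ) |
        ∃ α : C(Fin n → Circle, ℂ), ∀ (m : Fin n → ℤ) (z : Fin n → Circle),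
          b m z = (∏ k, (z k : ℂ) ^ (m k)) * α z - α z} := by
  have : NeZero n := ⟨by omega⟩
  refine ⟨⟨distBump 1, norm_distBump 1, tendsto_iSup_norm_torusChar_mul_distBump_sub⟩,
    fun hclosed => ?_⟩
  obtain ⟨α, hα⟩ := hclosed.mem_of_tendsto tendsto_torusCoboundary_truncInvSqrtDist
    (.of_forall fun j => ⟨truncInvSqrtDist 1 j, fun m z => rfl⟩)
  exact torusCoboundary_ne_singularCocycle α
    (funext fun m => ContinuousMap.ext fun z => (hα m z).symm)
end

section
/- The quotient vector space C(\mathbb{T}) / (z-1)C(\mathbb{T}) is infinite-dimensional over \mathbb{C}. -/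
/-!
The functions `|z - 1| ^ s`, `0 ≤ s < 1`, stay independent modulo `(z - 1) C(𝕋)`: every element
of `(z - 1) C(𝕋)` is `O(|z - 1|)` near `z = 1`, while a nontrivial combination
`∑ cᵢ |z - 1| ^ sᵢ` behaves like `c₀ |z - 1| ^ s₀` for the smallest exponent `s₀` with `c₀ ≠ 0`,
which is not `O(|z - 1|)` since `s₀ < 1`.
-/

/-- The function `z ↦ z - 1` as a continuous map on the circle. -/
noncomputable def zSubOne : C(Circle, ℂ) :=
  ⟨fun z => (z : ℂ) - 1, by fun_prop⟩

open Filter Topology Asymptotics NNReal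

section RpowSums

variable {X ι E : Type*} [NormedAddCommGroup E] [NormedSpace ℝ E] {l : Filter X} [l.NeBot]
  {r : X → ℝ}

theorem coeff_eq_zero_of_isBigO_rpow_smul_add_sum (hr : Tendsto r l (𝓝[>] 0)) {e : ι → ℝ}
    {a : ι} (ha : e a < 1) {t : Finset ι} (hlt : ∀ i ∈ t, e a < e i) (c : ι → E)
    (h : (fun x => r x ^ e a • c a + ∑ i ∈ t, r x ^ e i • c i) =O[l] r) : c a = 0 := by
  have hpos : ∀ᶠ x in l, 0 < r x := hr.eventually self_mem_nhdsWithin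
  have hrpow : ∀ p : ℝ, 0 < p → Tendsto (fun x => r x ^ p) l (𝓝 0) := fun p hp => by
    simpa [Real.zero_rpow hp.ne'] using
      (tendsto_nhds_of_tendsto_nhdsWithin hr).rpow_const (Or.inr hp.le)
  -- dividing by `r ^ e a` isolates the coefficient of the slowest-decaying term
  have hlim : Tendsto (fun x => r x ^ (-e a) • (r x ^ e a • c a + ∑ i ∈ t, r x ^ e i • c i)) l
      (𝓝 (c a)) := by
    have : Tendsto (fun x => c a + ∑ i ∈ t, r x ^ (e i - e a) • c i) l
        (𝓝 (c a + ∑ i ∈ t, (0 : ℝ) • c i)) :=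
      tendsto_const_nhds.add <| tendsto_finsetSum _ fun i hi =>
        (hrpow _ (sub_pos.2 (hlt i hi))).smul_const _
    simp only [zero_smul, Finset.sum_const_zero, add_zero] at this
    refine this.congr' (hpos.mono fun x hx => ?_)
    simp only [smul_add, smul_smul, Finset.smul_sum, ← Real.rpow_add hx, neg_add_cancel,
      Real.rpow_zero, one_smul, neg_add_eq_sub]
  have hzero : Tendsto (fun x => r x ^ (-e a) • (r x ^ e a • c a + ∑ i ∈ t, r x ^ e i • c i)) l
      (𝓝 0) := by
    refine ((isBigO_refl (fun x => r x ^ (-e a)) l).smul h).trans_tendsto ?_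
    refine (hrpow (1 - e a) (sub_pos.2 ha)).congr' (hpos.mono fun x hx => ?_)
    simp only [smul_eq_mul, ← Real.rpow_add_one hx.ne', neg_add_eq_sub]
  exact tendsto_nhds_unique hlim hzero

theorem eq_zero_of_isBigO_sum_rpow_smul (hr : Tendsto r l (𝓝[>] 0)) {e : ι → ℝ}
    (he : Function.Injective e) (he1 : ∀ i, e i < 1) (t : Finset ι) (c : ι → E)
    (h : (fun x => ∑ i ∈ t, r x ^ e i • c i) =O[l] r) : ∀ i ∈ t, c i = 0 := by
  classical
  induction t using Finset.induction_on_min_value e with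
  | empty => simp
  | insert a s ha hmin ih =>
    simp only [Finset.sum_insert ha] at h
    have hlt : ∀ i ∈ s, e a < e i := fun i hi =>
      (hmin i hi).lt_of_ne (he.ne (ne_of_mem_of_not_mem hi ha).symm)
    have hca : c a = 0 := coeff_eq_zero_of_isBigO_rpow_smul_add_sum hr (he1 a) hlt c h
    simp only [hca, smul_zero, zero_add] at h
    simpa [hca] using ih h

end RpowSums

section QuotientByMulLeft

variable {X 𝕜 : Type*} [TopologicalSpace X] [RCLike 𝕜]

noncomputable def ContinuousMap.normRpow (φ : C(X, 𝕜)) (s : ℝ≥0) : C(X, 𝕜) :=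
  ⟨fun x => ((‖φ x‖ ^ (s : ℝ) : ℝ) : 𝕜),
    RCLike.continuous_ofReal.comp ((Real.continuous_rpow_const s.2).comp (by fun_prop))⟩

theorem ContinuousMap.isBigO_norm_of_mem_range_mulLeft {φ f : C(X, 𝕜)}
    (hf : f ∈ LinearMap.range (LinearMap.mulLeft 𝕜 φ)) (x₀ : X) :
    (f : X → 𝕜) =O[𝓝 x₀] fun x => ‖φ x‖ := by
  obtain ⟨h, rfl⟩ := hf
  have := (isBigO_refl φ (𝓝 x₀)).norm_right.mul ((h.continuous.tendsto x₀).isBigO_one ℝ)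
  rw [LinearMap.mulLeft_apply, ContinuousMap.coe_mul]
  simp only [mul_one] at this
  exact this


theorem ContinuousMap.linearIndependent_mk_normRpow {φ : C(X, 𝕜)} {x₀ : X} [(𝓝[≠] x₀).NeBot]
    (hφx₀ : φ x₀ = 0) (hφ : ∀ᶠ x in 𝓝[≠] x₀, φ x ≠ 0) :
    LinearIndependent 𝕜 fun s : Set.Iio (1 : ℝ≥0) =>
      Submodule.Quotient.mk (p := LinearMap.range (LinearMap.mulLeft 𝕜 φ)) (φ.normRpow s) := by
  have hr : Tendsto (fun x => ‖φ x‖) (𝓝[≠] x₀) (𝓝[>] 0) := by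
    refine tendsto_nhdsWithin_iff.2 ⟨?_, hφ.mono fun x hx => norm_pos_iff.2 hx⟩
    simpa [hφx₀] using (φ.continuous.norm.tendsto x₀).mono_left nhdsWithin_le_nhds
  refine linearIndependent_iff'.2 fun t c hsum i hi => ?_
  have hmem : ∑ s ∈ t, c s • φ.normRpow s ∈ LinearMap.range (LinearMap.mulLeft 𝕜 φ) := by
    rw [← Submodule.Quotient.mk_eq_zero, ← Submodule.mkQ_apply, map_sum]
    simpa using hsum
  refine eq_zero_of_isBigO_sum_rpow_smul hr (e := fun s : Set.Iio (1 : ℝ≥0) => ((s : ℝ≥0) : ℝ))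
    (NNReal.coe_injective.comp Subtype.val_injective) (fun s => NNReal.coe_lt_one.2 s.2) t c ?_ i hi
  refine ((isBigO_norm_of_mem_range_mulLeft hmem x₀).mono nhdsWithin_le_nhds).congr_left fun x => ?_
  simp [normRpow, RCLike.real_smul_eq_coe_mul, mul_comm]

theorem ContinuousMap.not_finiteDimensional_quotient_range_mulLeft {φ : C(X, 𝕜)} {x₀ : X}
    [(𝓝[≠] x₀).NeBot] (hφx₀ : φ x₀ = 0) (hφ : ∀ᶠ x in 𝓝[≠] x₀, φ x ≠ 0) :
    ¬ FiniteDimensional 𝕜 (C(X, 𝕜) ⧸ LinearMap.range (LinearMap.mulLeft 𝕜 φ)) := fun _ =>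
  have : Infinite (Set.Iio (1 : ℝ≥0)) :=
    ((Set.Ioo_infinite zero_lt_one).mono Set.Ioo_subset_Iio_self).to_subtype
  Module.Finite.not_linearIndependent_of_infinite _ (linearIndependent_mk_normRpow hφx₀ hφ)

end QuotientByMulLeft

-- together with connectedness, this makes `𝓝[≠] z` nontrivial on the circle
instance : Nontrivial Circle :=
  ⟨⟨Circle.exp Real.pi, 1, fun h => by norm_num [Circle.ext_iff] at h⟩⟩

/-- The quotient vector space `C(𝕋) / (z-1)C(𝕋)` is infinite-dimensional over `ℂ`. -/
theorem stmt17 :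
    ¬ FiniteDimensional ℂ
      (C(Circle, ℂ) ⧸ LinearMap.range (LinearMap.mulLeft ℂ zSubOne)) :=
  ContinuousMap.not_finiteDimensional_quotient_range_mulLeft (x₀ := 1) (by simp [zSubOne])
    (eventually_nhdsWithin_of_forall fun z hz => sub_ne_zero.2 fun h => hz (Circle.ext h))
end
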